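/- arXiv:1703.08352 — 2 statements merged into one kernel-verified Lean document; each statement's English description precedes it below -/
import Mathlib

section
/- For $l \ge 1$ real (or complex) numbers $\theta_1, \dots, \theta_l$, let $F_j = \begin{pmatrix} e^{i\theta_j} & 0 \\ 0 & e^{-i\theta_j} \end{pmatrix} \begin{pmatrix} 1 & i \\ -i & 1 \end{pmatrix}$. Then $\operatorname{tr}(F_l F_{l-1} \cdots F_1) = 2^l \prod_{j=1}^l \cos \theta_j$. -/
open Matrix Complex

lemma Fmul_key (θ : ℕ → ℂ) (F : ℕ → Matrix (Fin 2) (Fin 2) ℂ)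
    (hF : ∀ j, F j =
      (!![Complex.exp (Complex.I * θ j), 0; 0, Complex.exp (-(Complex.I * θ j))]
          : Matrix (Fin 2) (Fin 2) ℂ)
        * !![1, Complex.I; -Complex.I, 1]) (m n : ℕ) :
    F m * F n = (2 * Complex.cos (θ n)) • F m := by
  rw [hF m, hF n]
  ext i j
  fin_cases i <;> fin_cases j <;>
    simp [Matrix.mul_apply, Fin.sum_univ_two, Complex.cos, Complex.exp_neg,
      mul_comm (Complex.I)] <;>
    field_simp <;> ring_nf <;> simp [Complex.I_sq] <;> ring

lemma trace_key (θ : ℕ → ℂ) (F : ℕ → Matrix (Fin 2) (Fin 2) ℂ)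
    (hF : ∀ j, F j =
      (!![Complex.exp (Complex.I * θ j), 0; 0, Complex.exp (-(Complex.I * θ j))]
          : Matrix (Fin 2) (Fin 2) ℂ)
        * !![1, Complex.I; -Complex.I, 1]) (n : ℕ) :
    (F n).trace = 2 * Complex.cos (θ n) := by
  rw [hF n]
  simp [Matrix.trace_fin_two, Matrix.mul_apply, Fin.sum_univ_two, Complex.cos,
    Complex.exp_neg, mul_comm (Complex.I)]
  field_simp

/-- Trace formula for products of type 1° transition blocks:
    `tr(F_l ⋯ F_1) = 2^l ∏ cos θ_j`. -/
theorem trace_product_type_one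
    (l : ℕ) (hl : 1 ≤ l) (θ : ℕ → ℂ)
    (F : ℕ → Matrix (Fin 2) (Fin 2) ℂ)
    (hF : ∀ j, F j =
      (!![Complex.exp (Complex.I * θ j), 0; 0, Complex.exp (-(Complex.I * θ j))]
          : Matrix (Fin 2) (Fin 2) ℂ)
        * !![1, Complex.I; -Complex.I, 1]) :
    (((List.range l).reverse.map F).prod).trace
      = 2 ^ l * ∏ j ∈ Finset.range l, Complex.cos (θ j) := by
  have main : ∀ k, (((List.range (k+1)).reverse.map F).prod)
      = (∏ j ∈ Finset.range k, (2 * Complex.cos (θ j))) • F k := by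
    intro k
    induction k with
    | zero => simp [List.range_succ]
    | succ k ih =>
      rw [List.range_succ, List.reverse_append]
      simp only [List.reverse_singleton, List.singleton_append, List.map_cons,
        List.prod_cons]
      rw [ih, Matrix.mul_smul, Fmul_key θ F hF, smul_smul,
        Finset.prod_range_succ, mul_comm]
  obtain ⟨k, rfl⟩ : ∃ k, l = k + 1 := ⟨l - 1, (Nat.succ_pred_eq_of_pos hl).symm⟩
  rw [main k, Matrix.trace_smul, trace_key θ F hF, smul_eq_mul,
    ← Finset.prod_range_succ (fun j => 2 * Complex.cos (θ j)) k,
    Finset.prod_mul_distrib, Finset.prod_const, Finset.card_range]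
end

section
/- Let $a, b, c, d : (0, h_0) \to \mathbb{C}$ satisfy $a(h), b(h), c(h), d(h) = 1 + O(h)$ as $h \to 0$, let $S \in \mathbb{C}$ with $\operatorname{Re} S > 0$, and let $I \in \mathbb{R}$. Define $T(h) = e^{S/h} \begin{pmatrix} e^{iI/h} & 0 \\ 0 & e^{-iI/h} \end{pmatrix} \begin{pmatrix} a(h) & i b(h) \\ -i c(h) & d(h) \end{pmatrix}$. Then $\operatorname{tr}(T(h)) = e^{S/h}\big(2\cos(I/h) + O(h)\big)$; in particular, if $\operatorname{tr}(T(h)) = 2$ for all small $h$, then $\cos(I/h) = O(h) + O(e^{-\operatorname{Re}(S)/h})$, hence $\cos(I/h) \to 0$ as $h \to 0$. -/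
/-!
Only the diagonal of the matrix enters the trace, so
`tr T = e^{S/h} (e^{iI/h} a + e^{-iI/h} d) = e^{S/h} (2 cos(I/h) + O(h))` because the phases
have modulus one. If `tr T = 2`, dividing by `|e^{S/h}| = e^{Re S/h}` leaves
`|cos(I/h)| ≤ O(h) + e^{-Re S/h}`, and both terms vanish as `h → 0⁺` since `Re S > 0`.
-/

open Matrix Complex Filter Topology

theorem trace_diag_exp_mul_sub_two_cos (θ : ℂ) (M : Matrix (Fin 2) (Fin 2) ℂ) :
    (!![exp (I * θ), 0; 0, exp (-(I * θ))] * M).trace - 2 * cos θ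
      = exp (I * θ) * (M 0 0 - 1) + exp (-(I * θ)) * (M 1 1 - 1) := by
  rw [two_cos, mul_comm θ, neg_mul, mul_comm θ]
  simp [trace_fin_two, vecMul, dotProduct, Fin.sum_univ_two]
  ring

theorem norm_trace_diag_exp_mul_sub_two_cos_le (θ : ℝ) (M : Matrix (Fin 2) (Fin 2) ℂ) {ε : ℝ}
    (h₀ : ‖M 0 0 - 1‖ ≤ ε) (h₁ : ‖M 1 1 - 1‖ ≤ ε) :
    ‖(!![exp (I * θ), 0; 0, exp (-(I * θ))] * M).trace - 2 * cos θ‖ ≤ 2 * ε := by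
  have hnorm : ‖exp (-(I * θ))‖ = 1 := by
    rw [← mul_neg, ← ofReal_neg, norm_exp_I_mul_ofReal]
  calc _ ≤ ‖exp (I * θ) * (M 0 0 - 1)‖ + ‖exp (-(I * θ)) * (M 1 1 - 1)‖ := by
        rw [trace_diag_exp_mul_sub_two_cos]; exact norm_add_le _ _
    _ ≤ ε + ε := by
        rw [norm_mul, norm_mul, norm_exp_I_mul_ofReal, hnorm, one_mul, one_mul]
        exact add_le_add h₀ h₁
    _ = 2 * ε := by ring

theorem norm_le_add_div_of_norm_sub_mul_le {𝕜 : Type*} [NormedDivisionRing 𝕜] {t z w : 𝕜}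
    {ε : ℝ} (hz : z ≠ 0) (h : ‖t - z * w‖ ≤ ‖z‖ * ε) : ‖w‖ ≤ ε + ‖t‖ / ‖z‖ := by
  have hz' : 0 < ‖z‖ := norm_pos_iff.mpr hz
  have : ‖z‖ * ‖w‖ ≤ ‖z‖ * (ε + ‖t‖ / ‖z‖) := by
    calc ‖z‖ * ‖w‖ = ‖t - (t - z * w)‖ := by rw [sub_sub_cancel, norm_mul]
      _ ≤ ‖t‖ + ‖z‖ * ε := (norm_sub_le _ _).trans (by gcongr)
      _ = ‖z‖ * (ε + ‖t‖ / ‖z‖) := by field_simp; ring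
  exact le_of_mul_le_mul_left this hz'

theorem Real.tendsto_exp_neg_div_nhdsGT_zero {r : ℝ} (hr : 0 < r) :
    Tendsto (fun h : ℝ => Real.exp (-r / h)) (𝓝[>] 0) (𝓝 0) := by
  have : Tendsto (fun h : ℝ => -r / h) (𝓝[>] 0) atBot := by
    simpa only [div_eq_mul_inv] using
      tendsto_inv_nhdsGT_zero.const_mul_atTop_of_neg (neg_neg_of_pos hr)
  exact Real.tendsto_exp_atBot.comp this

theorem tendsto_nhdsGT_zero_of_norm_le_mul_add_exp {E : Type*} [SeminormedAddCommGroup E]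
    {f : ℝ → E} {δ r K : ℝ} (hδ : 0 < δ) (hr : 0 < r)
    (hf : ∀ h ∈ Set.Ioo 0 δ, ‖f h‖ ≤ K * h + K * Real.exp (-r / h)) :
    Tendsto f (𝓝[>] 0) (𝓝 0) := by
  have hbound : Tendsto (fun h : ℝ => K * h + K * Real.exp (-r / h)) (𝓝[>] 0) (𝓝 0) := by
    have hlin : Tendsto (fun h : ℝ => K * h) (𝓝[>] 0) (𝓝 0) := by
      simpa using ((continuous_const_mul K).tendsto 0).mono_left nhdsWithin_le_nhds
    simpa using hlin.add ((Real.tendsto_exp_neg_div_nhdsGT_zero hr).const_mul K)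
  exact squeeze_zero_norm' (eventually_of_mem (Ioo_mem_nhdsGT hδ) hf) hbound

/-- Trace asymptotics of a single transition matrix and the resulting
    quantization: `tr T = e^{S/h}(2cos(I/h) + O(h))`, and if `tr T = 2` for all
    small `h`, then `cos(I/h) = O(h) + O(e^{-Re S/h})`, hence `cos(I/h) → 0`. -/
theorem trace_quantization_l_eq_one
    (h₀ : ℝ) (hh₀ : 0 < h₀) (a b c d : ℝ → ℂ)
    (habcd : ∃ C > (0 : ℝ), ∀ h ∈ Set.Ioo (0 : ℝ) h₀,
      ‖a h - 1‖ ≤ C * h ∧ ‖b h - 1‖ ≤ C * h ∧ ‖c h - 1‖ ≤ C * h ∧ ‖d h - 1‖ ≤ C * h)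
    (S : ℂ) (hS : 0 < S.re) (I' : ℝ)
    (T : ℝ → Matrix (Fin 2) (Fin 2) ℂ)
    (hT : ∀ h ∈ Set.Ioo (0 : ℝ) h₀,
      T h = Complex.exp (S / h) •
        ((!![Complex.exp (Complex.I * (I' / h)), 0;
             0, Complex.exp (-(Complex.I * (I' / h)))] : Matrix (Fin 2) (Fin 2) ℂ)
          * !![a h, Complex.I * b h; -(Complex.I * c h), d h])) :
    (∃ C > (0 : ℝ), ∀ h ∈ Set.Ioo (0 : ℝ) h₀,
      ‖(T h).trace - Complex.exp (S / h) * (2 * Complex.cos (I' / h))‖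
        ≤ ‖Complex.exp (S / h)‖ * (C * h))
    ∧ ((∀ h ∈ Set.Ioo (0 : ℝ) h₀, (T h).trace = 2) →
        (∃ C > (0 : ℝ), ∀ h ∈ Set.Ioo (0 : ℝ) h₀,
          ‖Complex.cos ((I' : ℂ) / h)‖ ≤ C * h + C * Real.exp (-S.re / h))
        ∧ Tendsto (fun h : ℝ => Complex.cos ((I' : ℂ) / h))
            (nhdsWithin 0 (Set.Ioi 0)) (nhds 0)) := by
  obtain ⟨C, hC, habcd⟩ := habcd
  have htrace : ∀ h ∈ Set.Ioo (0 : ℝ) h₀,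
      ‖(T h).trace - exp (S / h) * (2 * cos (I' / h))‖ ≤ ‖exp (S / h)‖ * (2 * C * h) := by
    intro h hh
    obtain ⟨ha, -, -, hd⟩ := habcd h hh
    have hdiag := norm_trace_diag_exp_mul_sub_two_cos_le (I' / h)
      !![a h, I * b h; -(I * c h), d h] ha hd
    push_cast at hdiag
    rw [hT h hh, trace_smul, smul_eq_mul, ← mul_sub, norm_mul, mul_assoc]
    gcongr
  refine ⟨⟨2 * C, by positivity, htrace⟩, fun htr => ?_⟩
  have hcos : ∀ h ∈ Set.Ioo (0 : ℝ) h₀,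
      ‖cos (I' / h)‖ ≤ (C + 1) * h + (C + 1) * Real.exp (-S.re / h) := by
    intro h hh
    have hnorm : ‖(2 : ℂ)‖ / ‖exp (S / h)‖ = 2 * Real.exp (-S.re / h) := by
      rw [norm_exp, div_ofReal_re, neg_div, Real.exp_neg, Complex.norm_two, div_eq_mul_inv]
    have h2cos := norm_le_add_div_of_norm_sub_mul_le (exp_ne_zero _) (htr h hh ▸ htrace h hh)
    rw [norm_mul, hnorm, Complex.norm_two] at h2cos
    nlinarith [hh.1, Real.exp_pos (-S.re / h)]
  exact ⟨⟨C + 1, by positivity, hcos⟩,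
    tendsto_nhdsGT_zero_of_norm_le_mul_add_exp hh₀ hS hcos⟩
end
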